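/- arXiv:1909.03112 — 3 statements merged into one kernel-verified Lean document; each statement's English description precedes it below -/
import Mathlib

section
/- Let f be differentiable on an open interval containing [a,b] with f' strictly decreasing. Suppose x₀, x₁, ..., x_{n+1} are points in [a,b] (not assumed ordered) with x₀ = a, x_{n+1} = b, such that for every i = 1, ..., n, f'(x_i) · (x_{i+1} - x_{i-1}) = f(x_{i+1}) - f(x_{i-1}) and x_{i-1} ≠ x_{i+1}. Then the sequence is strictly increasing: x_{i-1} < x_i < x_{i+1} for all i = 1, ..., n. -/
/-!
By the mean value theorem, the slope of `f` between `x (i - 1)` and `x (i + 1)` is a value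
`deriv f c` at some `c` strictly between them; since `deriv f` is injective, the stationarity
condition forces `x i = c`. So every interior point lies strictly between its neighbours, and
starting from `x 0 = a ≤ x 1` this betweenness propagates into monotonicity along the chain.
-/

open Set

theorem mem_Ioo_of_deriv_mul_sub_eq {f : ℝ → ℝ} {s : Set ℝ} {p q y : ℝ}
    (hd : DifferentiableOn ℝ f s) (hinj : InjOn (deriv f) s) (hpq : p < q)
    (hsub : Icc p q ⊆ s) (hy : y ∈ s) (h : deriv f y * (q - p) = f q - f p) :
    y ∈ Ioo p q := by
  obtain ⟨c, hc, hslope⟩ := exists_deriv_eq_slope f hpq (hd.continuousOn.mono hsub)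
    (hd.mono (Ioo_subset_Icc_self.trans hsub))
  have hderiv : deriv f y = deriv f c := by
    rw [hslope, eq_div_iff (sub_ne_zero.mpr hpq.ne'), h]
  rwa [hinj hy (hsub (Ioo_subset_Icc_self hc)) hderiv]

theorem mem_uIoo_of_deriv_mul_sub_eq {f : ℝ → ℝ} {s : Set ℝ} {p q y : ℝ}
    (hd : DifferentiableOn ℝ f s) (hinj : InjOn (deriv f) s) (hpq : p ≠ q)
    (hsub : uIcc p q ⊆ s) (hy : y ∈ s) (h : deriv f y * (q - p) = f q - f p) :
    y ∈ uIoo p q := by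
  rcases hpq.lt_or_gt with hlt | hgt
  · rw [uIoo_of_lt hlt]
    exact mem_Ioo_of_deriv_mul_sub_eq hd hinj hlt (uIcc_of_lt hlt ▸ hsub) hy h
  · rw [uIoo_of_gt hgt]
    exact mem_Ioo_of_deriv_mul_sub_eq hd hinj hgt (uIcc_of_gt hgt ▸ hsub) hy (by linarith)

theorem lt_of_mem_uIoo_of_lt {p q y : ℝ} (hy : y ∈ uIoo p q) (hpy : p < y) : y < q := by
  rcases le_or_gt q p with hqp | hpq
  · exact absurd (uIoo_of_ge hqp ▸ hy).2 hpy.not_gt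
  · exact (uIoo_of_lt hpq ▸ hy).2

theorem lt_succ_of_mem_uIoo {x : ℕ → ℝ} {n : ℕ} (h01 : x 0 ≤ x 1)
    (hbetween : ∀ i, 1 ≤ i → i ≤ n → x i ∈ uIoo (x (i - 1)) (x (i + 1))) :
    ∀ i, i < n → x i < x (i + 1) := by
  intro i
  induction i with
  | zero =>
    intro hn
    have hx1 := hbetween 1 le_rfl hn
    exact h01.lt_of_ne fun h ↦ left_notMem_uIoo (h ▸ hx1)
  | succ i ih =>
    intro hi
    have hx := hbetween (i + 1) (by omega) hi.le
    exact lt_of_mem_uIoo_of_lt hx (ih (by omega))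

theorem stmt_4_general (f : ℝ → ℝ) (s : Set ℝ) (a b : ℝ)
    (hsub : Set.Icc a b ⊆ s) (hd : DifferentiableOn ℝ f s)
    (hanti : StrictAntiOn (deriv f) s)
    (n : ℕ) (x : ℕ → ℝ)
    (hmem : ∀ i ≤ n + 1, x i ∈ Set.Icc a b)
    (h0 : x 0 = a)
    (hstat : ∀ i, 1 ≤ i → i ≤ n →
      deriv f (x i) * (x (i + 1) - x (i - 1)) = f (x (i + 1)) - f (x (i - 1)))
    (hne : ∀ i, 1 ≤ i → i ≤ n → x (i - 1) ≠ x (i + 1)) :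
    ∀ i, 1 ≤ i → i ≤ n → x (i - 1) < x i ∧ x i < x (i + 1) := by
  have hbetween : ∀ i, 1 ≤ i → i ≤ n → x i ∈ uIoo (x (i - 1)) (x (i + 1)) := fun i h1 h2 ↦
    mem_uIoo_of_deriv_mul_sub_eq hd hanti.injOn (hne i h1 h2)
      ((uIcc_subset_Icc (hmem _ (by omega)) (hmem _ (by omega))).trans hsub)
      (hsub (hmem i (by omega))) (hstat i h1 h2)
  have hstep := lt_succ_of_mem_uIoo (h0 ▸ (hmem 1 (by omega)).1) hbetween
  intro i h1 h2
  have hleft : x (i - 1) < x i := by simpa [Nat.sub_add_cancel h1] using hstep (i - 1) (by omega)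
  exact ⟨hleft, lt_of_mem_uIoo_of_lt (hbetween i h1 h2) hleft⟩

theorem stmt_4 (f : ℝ → ℝ) (s : Set ℝ) (a b : ℝ) (hs : IsOpen s)
    (hsub : Set.Icc a b ⊆ s) (hd : DifferentiableOn ℝ f s)
    (hanti : StrictAntiOn (deriv f) s)
    (n : ℕ) (x : ℕ → ℝ)
    (hmem : ∀ i ≤ n + 1, x i ∈ Set.Icc a b)
    (h0 : x 0 = a) (hlast : x (n + 1) = b)
    (hstat : ∀ i, 1 ≤ i → i ≤ n →
      deriv f (x i) * (x (i + 1) - x (i - 1)) = f (x (i + 1)) - f (x (i - 1)))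
    (hne : ∀ i, 1 ≤ i → i ≤ n → x (i - 1) ≠ x (i + 1)) :
    ∀ i, 1 ≤ i → i ≤ n → x (i - 1) < x i ∧ x i < x (i + 1) :=
  stmt_4_general f s a b hsub hd hanti n x hmem h0 hstat hne
end

section
/- Let f(x) = α x² + β x + γ with α < 0, and let a < b. Suppose a = x₀ ≤ x₁ ≤ ⋯ ≤ x_n ≤ x_{n+1} = b satisfy, for all i = 1,…,n with x_{i-1} < x_{i+1}, the stationarity equations f(x_{i+1}) - f(x_{i-1}) + f'(x_i)(x_{i-1} - x_{i+1}) = 0. Then x_i = a + i·(b-a)/(n+1) for every i = 0, …, n+1, i.e., the knots are equally spaced. -/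
/-!
Writing `f x = α x² + β x + γ`, the stationarity expression factors as
`f w - f u + f' v (u - w) = α (w - u) (w + u - 2 v)`, so with `α ≠ 0` each interior knot is the
midpoint of its neighbours (trivially so when they coincide, by monotonicity). A sequence in which
every interior term is the mean of its neighbours is arithmetic, and its endpoints fix the step.
-/

lemma quadratic_secant_add_tangent_mul {R : Type*} [CommRing R] (α β γ u v w : R) :
    (α * w ^ 2 + β * w + γ) - (α * u ^ 2 + β * u + γ) + (2 * α * v + β) * (u - w) =
      α * (w - u) * (w + u - 2 * v) := by
  ring

lemma add_eq_two_mul_of_quadratic_stationary {K : Type*} [Field K] {α β γ u v w : K}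
    (hα : α ≠ 0) (huw : u ≠ w)
    (h : (α * w ^ 2 + β * w + γ) - (α * u ^ 2 + β * u + γ) + (2 * α * v + β) * (u - w) = 0) :
    w + u = 2 * v := by
  rw [quadratic_secant_add_tangent_mul] at h
  have := (mul_eq_zero.mp h).resolve_left (mul_ne_zero hα (sub_ne_zero.mpr huw.symm))
  exact sub_eq_zero.mp this

lemma eq_add_mul_of_add_eq_two_mul {R : Type*} [CommRing R] {n : ℕ} {x : ℕ → R}
    (h : ∀ i < n, x (i + 2) + x i = 2 * x (i + 1)) :
    ∀ i ≤ n + 1, x i = x 0 + i * (x 1 - x 0) := by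
  intro i
  induction i using Nat.strong_induction_on with
  | _ i ih =>
    rcases i with _ | _ | k
    · simp
    · simp
    · intro hk
      have hk1 := ih (k + 1) (by omega) (by omega)
      have hk0 := ih k (by omega) (by omega)
      have := h k (by omega)
      push_cast at hk1 hk0 ⊢
      linear_combination this + 2 * hk1 - hk0

theorem stmt_5_general (α β γ a b : ℝ) (hα : α < 0) (n : ℕ) (x : ℕ → ℝ)
    (h0 : x 0 = a) (hlast : x (n + 1) = b)
    (hmono : ∀ i ≤ n, x i ≤ x (i + 1))
    (hstat : ∀ i, 1 ≤ i → i ≤ n → x (i - 1) < x (i + 1) →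
      (α * (x (i + 1))^2 + β * x (i + 1) + γ) - (α * (x (i - 1))^2 + β * x (i - 1) + γ)
        + (2 * α * x i + β) * (x (i - 1) - x (i + 1)) = 0) :
    ∀ i ≤ n + 1, x i = a + i * (b - a) / (n + 1) := by
  have hmid : ∀ i < n, x (i + 2) + x i = 2 * x (i + 1) := by
    intro i hi
    have hle₁ := hmono i (by omega)
    have hle₂ := hmono (i + 1) hi
    rcases (hle₁.trans hle₂).lt_or_eq with hlt | heq
    · exact add_eq_two_mul_of_quadratic_stationary hα.ne hlt.ne
        (hstat (i + 1) (by omega) hi hlt)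
    · linarith
  have harith := eq_add_mul_of_add_eq_two_mul hmid
  have hstep : x 1 - x 0 = (b - a) / (n + 1) := by
    have := harith (n + 1) le_rfl
    rw [hlast, h0] at this
    rw [h0]
    push_cast at this
    field_simp
    linarith
  intro i hi
  rw [harith i hi, hstep, h0]
  ring

theorem stmt_5 (α β γ a b : ℝ) (hα : α < 0) (hab : a < b) (n : ℕ) (x : ℕ → ℝ)
    (h0 : x 0 = a) (hlast : x (n + 1) = b)
    (hmono : ∀ i ≤ n, x i ≤ x (i + 1))
    (hstat : ∀ i, 1 ≤ i → i ≤ n → x (i - 1) < x (i + 1) →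
      (α * (x (i + 1))^2 + β * x (i + 1) + γ) - (α * (x (i - 1))^2 + β * x (i - 1) + γ)
        + (2 * α * x i + β) * (x (i - 1) - x (i + 1)) = 0) :
    ∀ i ≤ n + 1, x i = a + i * (b - a) / (n + 1) :=
  stmt_5_general α β γ a b hα n x h0 hlast hmono hstat
end

section
/- Let T = tridiag(d_i, e_i) be a real symmetric tridiagonal n×n matrix with diagonal entries d_i > 0 and off-diagonal entries e_i. If e_i² < (1/4)·d_i·d_{i+1} / cos²(π/(n+1)) for all i = 1, …, n−1, then T is positive definite. -/
/-!
With `w i = √(d i) * |x i|` the quadratic form of `T` is `∑ w i ^ 2 + 2 ∑ e i x i x (i + 1)`,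
and the hypothesis says `2 cos (π / (n + 1)) |e i x i x (i + 1)| < w i w (i + 1)` whenever
`x i x (i + 1) ≠ 0`. So, unless all these products vanish and the form is `∑ d i x i ^ 2 > 0`,
the form exceeds `∑ w i ^ 2 - ∑ w i w (i + 1) / cos (π / (n + 1))`. This is nonnegative because
`2 cos (π / (n + 1))` is the largest eigenvalue of the adjacency matrix of the path on `n`
vertices, a bound that follows from the weighted AM-GM inequalities
`2 w i w (i + 1) ≤ (s (i + 2) / s (i + 1)) w i ^ 2 + (s (i + 1) / s (i + 2)) w (i + 1) ^ 2`
for the Perron eigenvector `s k = sin (k π / (n + 1))`.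
-/

open Finset Real Matrix

theorem two_mul_le_div_mul_sq_add_div_mul_sq {a b : ℝ} (ha : 0 < a) (hb : 0 < b) (x y : ℝ) :
    2 * (x * y) ≤ b / a * x ^ 2 + a / b * y ^ 2 := by
  rw [div_mul_eq_mul_div, div_mul_eq_mul_div, div_add_div _ _ ha.ne' hb.ne',
    le_div_iff₀ (by positivity)]
  nlinarith [sq_nonneg (b * x - a * y)]

/-- `s 1, …, s n` is a positive eigenvector, for the eigenvalue `μ`, of the adjacency matrix of
the path on `n` vertices; the boundary values `s 0 = s (n + 1) = 0` make the eigen-equation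
uniform. -/
theorem two_mul_sum_mul_succ_le_of_eigenvector {n : ℕ} {μ : ℝ} {s : ℕ → ℝ}
    (hs0 : s 0 = 0) (hsn : s (n + 1) = 0) (hpos : ∀ k < n, 0 < s (k + 1))
    (hrec : ∀ k < n, s (k + 2) + s k = μ * s (k + 1)) (w : ℕ → ℝ) :
    2 * ∑ i ∈ range (n - 1), w i * w (i + 1) ≤ μ * ∑ i ∈ range n, w i ^ 2 := by
  obtain _ | m := n
  · simp
  have hterm : ∀ i ∈ range m, 2 * (w i * w (i + 1)) ≤
      s (i + 2) / s (i + 1) * w i ^ 2 + s (i + 1) / s (i + 2) * w (i + 1) ^ 2 := fun i hi =>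
    two_mul_le_div_mul_sq_add_div_mul_sq (hpos i (Nat.lt_succ_of_lt (mem_range.mp hi)))
      (hpos (i + 1) (Nat.succ_lt_succ (mem_range.mp hi))) _ _
  have hfwd : ∑ i ∈ range m, s (i + 2) / s (i + 1) * w i ^ 2 =
      ∑ i ∈ range (m + 1), s (i + 2) / s (i + 1) * w i ^ 2 := by
    simp [sum_range_succ, hsn]
  have hbwd : ∑ i ∈ range m, s (i + 1) / s (i + 2) * w (i + 1) ^ 2 =
      ∑ i ∈ range (m + 1), s i / s (i + 1) * w i ^ 2 := by
    simp [sum_range_succ', hs0]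
  calc 2 * ∑ i ∈ range (m + 1 - 1), w i * w (i + 1)
      ≤ ∑ i ∈ range (m + 1), (s (i + 2) + s i) / s (i + 1) * w i ^ 2 := by
        rw [Nat.add_sub_cancel, mul_sum]
        refine (sum_le_sum hterm).trans_eq ?_
        rw [sum_add_distrib, hfwd, hbwd, ← sum_add_distrib]
        simp only [add_div, add_mul]
    _ = μ * ∑ i ∈ range (m + 1), w i ^ 2 := by
        rw [mul_sum]
        refine sum_congr rfl fun k hk => ?_
        rw [hrec k (mem_range.mp hk), mul_div_cancel_right₀ _ (hpos k (mem_range.mp hk)).ne']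

theorem two_mul_sum_mul_succ_le_two_mul_cos_mul_sum_sq (n : ℕ) (w : ℕ → ℝ) :
    2 * ∑ i ∈ range (n - 1), w i * w (i + 1) ≤
      2 * cos (π / (n + 1)) * ∑ i ∈ range n, w i ^ 2 := by
  have hn : (0 : ℝ) < n + 1 := by positivity
  refine two_mul_sum_mul_succ_le_of_eigenvector (s := fun k => sin (k * (π / (n + 1))))
    (by simp) ?_ (fun k hk => sin_pos_of_pos_of_lt_pi (by positivity) ?_) (fun k _ => ?_) w
  · simp [mul_div_cancel₀ _ hn.ne']
  · rw [mul_div_assoc', div_lt_iff₀ hn, mul_comm]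
    gcongr
    exact_mod_cast Nat.succ_lt_succ hk
  · rw [sin_add_sin]
    push_cast
    ring_nf

theorem sum_range_ite_succ_lt {M : Type*} [AddCommMonoid M] (n : ℕ) (f : ℕ → M) :
    ∑ i ∈ range n, (if i + 1 < n then f i else 0) = ∑ i ∈ range (n - 1), f i := by
  rw [← sum_filter]
  congr 1
  ext i
  simp only [mem_filter, mem_range]
  omega

section Tridiagonal

variable {R : Type*} (d e : ℕ → R)

def tridiagEntry [Zero R] (i j : ℕ) : R :=
  if i = j then d i else if i + 1 = j ∨ j + 1 = i then e (min i j) else 0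

def tridiag [Zero R] (n : ℕ) : Matrix (Fin n) (Fin n) R :=
  Matrix.of fun i j => tridiagEntry d e i j

theorem tridiag_isSymm [Zero R] (n : ℕ) : (tridiag d e n).IsSymm := by
  ext i j
  rcases eq_or_ne (i : ℕ) j with h | h <;>
    simp [tridiag, tridiagEntry, h, eq_comm, or_comm, min_comm]

theorem tridiagEntry_eq [AddMonoid R] (i j : ℕ) :
    tridiagEntry d e i j =
      (if j = i then d i else 0) + (if j = i + 1 then e i else 0) +
        (if i = j + 1 then e j else 0) := by
  unfold tridiagEntry
  split_ifs <;> first | omega | (subst_vars; simp)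

theorem dotProduct_tridiag_mulVec [CommRing R] (n : ℕ) (X : ℕ → R) :
    (fun i : Fin n => X i) ⬝ᵥ (tridiag d e n *ᵥ fun i => X i) =
      ∑ i ∈ range n, d i * X i ^ 2 + 2 * ∑ i ∈ range (n - 1), e i * (X i * X (i + 1)) := by
  have hfin : ∀ g : ℕ → ℕ → R,
      ∑ i : Fin n, ∑ j : Fin n, g i j = ∑ i ∈ range n, ∑ j ∈ range n, g i j := by
    intro g
    rw [Fin.sum_univ_eq_sum_range (fun i => ∑ j : Fin n, g i j)]
    exact sum_congr rfl fun i _ => Fin.sum_univ_eq_sum_range (g i) n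
  simp only [dotProduct, mulVec, tridiag, of_apply, mul_sum]
  rw [hfin fun i j => X i * (tridiagEntry d e i j * X j)]
  simp only [tridiagEntry_eq, add_mul, mul_add, ite_mul, mul_ite, zero_mul, mul_zero,
    sum_add_distrib, sum_ite_eq', mem_range]
  rw [sum_comm (s := range n) (t := range n)]
  simp only [sum_ite_eq', mem_range]
  rw [sum_ite_of_true fun i hi => mem_range.mp hi, sum_range_ite_succ_lt, sum_range_ite_succ_lt,
    add_assoc, ← sum_add_distrib]
  congr 1 <;> exact sum_congr rfl fun i _ => by ring

end Tridiagonal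

theorem neg_sqrt_mul_abs_mul_lt {a b c x y : ℝ} (ha : 0 ≤ a) (hc : c ^ 2 < a * b)
    (hxy : x * y ≠ 0) : -((√a * |x|) * (√b * |y|)) < c * (x * y) := by
  have hc' : |c| < √a * √b := by
    rw [← sqrt_mul ha]
    exact (lt_sqrt (abs_nonneg c)).mpr (by rwa [sq_abs])
  calc -((√a * |x|) * (√b * |y|)) = -((√a * √b) * |x * y|) := by rw [abs_mul]; ring
    _ < -(|c| * |x * y|) := neg_lt_neg (mul_lt_mul_of_pos_right hc' (abs_pos.mpr hxy))
    _ = -|c * (x * y)| := by rw [abs_mul c]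
    _ ≤ c * (x * y) := neg_abs_le _

theorem neg_sqrt_mul_abs_mul_le {a b c x y : ℝ} (ha : 0 ≤ a) (hc : c ^ 2 < a * b) :
    -((√a * |x|) * (√b * |y|)) ≤ c * (x * y) := by
  rcases eq_or_ne (x * y) 0 with hxy | hxy
  · rcases mul_eq_zero.mp hxy with h | h <;> simp [h]
  · exact (neg_sqrt_mul_abs_mul_lt ha hc hxy).le

theorem tridiag_form_pos {n : ℕ} {μ : ℝ} {d e X : ℕ → ℝ} (hμ : 0 ≤ μ)
    (hpath : ∀ w : ℕ → ℝ,
      2 * ∑ i ∈ range (n - 1), w i * w (i + 1) ≤ μ * ∑ i ∈ range n, w i ^ 2)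
    (hd : ∀ i < n, 0 < d i) (he : ∀ i, i + 1 < n → (μ * e i) ^ 2 < d i * d (i + 1))
    (hX : ∃ j < n, X j ≠ 0) :
    0 < ∑ i ∈ range n, d i * X i ^ 2 +
      2 * ∑ i ∈ range (n - 1), e i * (X i * X (i + 1)) := by
  obtain ⟨j, hjn, hXj⟩ := hX
  set w : ℕ → ℝ := fun i => √(d i) * |X i|
  have hdiag : ∑ i ∈ range n, d i * X i ^ 2 = ∑ i ∈ range n, w i ^ 2 :=
    sum_congr rfl fun i hi => by rw [mul_pow, sq_sqrt (hd i (mem_range.mp hi)).le, sq_abs]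
  have hdiag_pos : 0 < ∑ i ∈ range n, d i * X i ^ 2 :=
    sum_pos' (fun i hi => mul_nonneg (hd i (mem_range.mp hi)).le (sq_nonneg _))
      ⟨j, mem_range.mpr hjn, mul_pos (hd j hjn) (by positivity)⟩
  by_cases hoff : ∀ i ∈ range (n - 1), X i * X (i + 1) = 0
  · have : ∑ i ∈ range (n - 1), e i * (X i * X (i + 1)) = 0 :=
      sum_eq_zero fun i hi => by rw [hoff i hi, mul_zero]
    rwa [this, mul_zero, add_zero]
  push Not at hoff
  obtain ⟨i₀, hi₀, hX₀⟩ := hoff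
  have hedge : ∀ i ∈ range (n - 1), i + 1 < n :=
    fun i hi => Nat.add_lt_of_lt_sub (mem_range.mp hi)
  have hoffdiag : -∑ i ∈ range (n - 1), w i * w (i + 1) <
      ∑ i ∈ range (n - 1), μ * e i * (X i * X (i + 1)) := by
    rw [← sum_neg_distrib]
    exact sum_lt_sum
      (fun i hi => neg_sqrt_mul_abs_mul_le (hd i (by grind)).le (he i (hedge i hi)))
      ⟨i₀, hi₀,
        neg_sqrt_mul_abs_mul_lt (hd i₀ (by grind)).le (he i₀ (hedge i₀ hi₀)) hX₀⟩
  have hμ_off : μ * ∑ i ∈ range (n - 1), e i * (X i * X (i + 1)) =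
      ∑ i ∈ range (n - 1), μ * e i * (X i * X (i + 1)) := by
    simp only [mul_sum, mul_assoc]
  refine pos_of_mul_pos_right ?_ hμ
  rw [mul_add, hdiag, mul_left_comm, hμ_off]
  linarith [hpath w]

theorem stmt_15 (n : ℕ) (d e : ℕ → ℝ)
    (hd : ∀ i < n, 0 < d i)
    (he : ∀ i, i + 1 < n →
      (e i)^2 < (1/4) * d i * d (i + 1) / (Real.cos (Real.pi / (n + 1)))^2) :
    (Matrix.of fun i j : Fin n =>
      if (i : ℕ) = (j : ℕ) then d i
      else if (i : ℕ) + 1 = (j : ℕ) ∨ (j : ℕ) + 1 = (i : ℕ) then e (min (i : ℕ) (j : ℕ))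
      else 0).PosDef := by
  change (tridiag d e n).PosDef
  refine posDef_iff_dotProduct_mulVec.mpr
    ⟨isHermitian_iff_isSymm.mpr (tridiag_isSymm d e n), fun x hx => ?_⟩
  obtain ⟨j, hj⟩ := Function.ne_iff.mp hx
  obtain ⟨X, hX⟩ : ∃ X : ℕ → ℝ, ∀ i : Fin n, X i = x i :=
    ⟨Function.extend Fin.val x 0, Fin.val_injective.extend_apply x 0⟩
  have hxX : x = fun i : Fin n => X i := funext fun i => (hX i).symm
  have hθ : 0 < π / (n + 1) := by positivity
  rw [star_trivial, hxX, dotProduct_tridiag_mulVec]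
  refine tridiag_form_pos (μ := 2 * cos (π / (n + 1))) ?_
    (two_mul_sum_mul_succ_le_two_mul_cos_mul_sum_sq n) hd (fun i hi => ?_) ⟨j, j.2, ?_⟩
  · have hle : π / (n + 1) ≤ π / 2 :=
      div_le_div_of_nonneg_left pi_pos.le two_pos (by have := j.pos; norm_cast; omega)
    have hcos := cos_nonneg_of_neg_pi_div_two_le_of_le (by linarith [pi_pos]) hle
    positivity
  · have hcos : 0 < cos (π / (n + 1)) := by
      refine cos_pos_of_mem_Ioo ⟨by linarith [pi_pos], div_lt_div_of_pos_left pi_pos two_pos ?_⟩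
      norm_cast; omega
    have hei := (lt_div_iff₀ (by positivity)).mp (he i hi)
    linarith
  · rwa [hX]
end
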